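/- In the node-activation model with gossip matrix W_1 = I − b L_1 for a real parameter b, the entrywise expectation of W_1² satisfies E[W_1²] = I − 2 b p² L_G + b² ( p³ (L_G² − 2 L_G) + 2 p² L_G ). -/

import Mathlib

open MeasureTheory ProbabilityTheory Matrix

noncomputable section

/-- The real-valued indicator of a Boolean. -/
def ind (b : Bool) : ℝ := if b then 1 else 0

/-- Adjacency matrix of the random induced subgraph: edge {i,j} of `G` is kept
iff both endpoints are active. -/
def A1 {N : ℕ} (G : SimpleGraph (Fin N)) [DecidableRel G.Adj] (X : Fin N → Bool) :
    Matrix (Fin N) (Fin N) ℝ :=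
  Matrix.of fun i j => (G.adjMatrix ℝ) i j * ind (X i) * ind (X j)

/-- Diagonal degree matrix of the random induced subgraph. -/
def D1 {N : ℕ} (G : SimpleGraph (Fin N)) [DecidableRel G.Adj] (X : Fin N → Bool) :
    Matrix (Fin N) (Fin N) ℝ :=
  Matrix.diagonal fun i => ∑ j, A1 G X i j

/-- Laplacian of the random induced subgraph. -/
def L1 {N : ℕ} (G : SimpleGraph (Fin N)) [DecidableRel G.Adj] (X : Fin N → Bool) :
    Matrix (Fin N) (Fin N) ℝ :=
  D1 G X - A1 G X

/-! Write `x v` for the indicator that node `v` is active and `a` for the adjacency matrix of `G`.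
Entrywise `(L₁)ᵢⱼ = ∑ₘ aᵢₘ (δᵢⱼ - δₘⱼ) xᵢ xₘ`, and, using `x² = x`, `(L₁²)ᵢⱼ` is a linear
combination of the monomials `xᵢ xₘ xₙ`. By independence a product of indicators has
expectation `p ^ (number of distinct nodes)`; since `aᵢᵢ = 0`, only `m ≠ i` contributes, and the
count is `3` except on the two diagonals `n = i`, `n = m`, where it is `2`. Setting all `x = 1`
shows that the coefficients sum to `(L_G²)ᵢⱼ`, while each diagonal sums to `(L_G)ᵢⱼ`; hence
`E[L₁] = p² L_G` and `E[L₁²] = p³ L_G² + 2 (p² - p³) L_G`. -/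

lemma prod_ind_eq_indicator {ι Ω : Type*} (X : ι → Ω → Bool) (S : Finset ι) :
    (fun ω => ∏ s ∈ S, ind (X s ω)) = (⋂ s ∈ S, X s ⁻¹' {true}).indicator 1 := by
  classical
  funext ω
  simp [ind, Finset.prod_boole, Set.indicator_apply]

lemma pow_card_insert_insert_singleton {ι R : Type*} [DecidableEq ι] [CommRing R] (p : R)
    {u v : ι} (huv : u ≠ v) (w : ι) :
    p ^ ({u, v, w} : Finset ι).card
      = p ^ 3 + (p ^ 2 - p ^ 3) * ((if w = u then 1 else 0) + if w = v then 1 else 0) := by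
  by_cases hu : w = u
  · subst hu; simp [huv, Finset.card_pair huv.symm]
  by_cases hv : w = v
  · subst hv; simp [hu, Finset.card_pair huv]
  · rw [Finset.card_insert_of_notMem (by simp [huv, Ne.symm hu]), Finset.card_pair (Ne.symm hv)]
    simp [hu, hv]

lemma one_sub_smul_mul_self {n : Type*} [Fintype n] [DecidableEq n] (b : ℝ) (L : Matrix n n ℝ) :
    (1 - b • L) * (1 - b • L) = 1 - (2 * b) • L + b ^ 2 • (L * L) := by
  simp only [sub_mul, mul_sub, one_mul, mul_one, smul_mul_smul_comm, sq, mul_smul, two_smul]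
  abel

section Bernoulli

variable {ι Ω : Type*} [MeasurableSpace Ω] {μ : Measure Ω} {X : ι → Ω → Bool} {p : ℝ}

lemma integrable_comp_pi_bool [IsFiniteMeasure μ] [Finite ι] (hmeas : ∀ i, Measurable (X i))
    (f : (ι → Bool) → ℝ) : Integrable (fun ω => f (fun i => X i ω)) μ :=
  Integrable.of_finite.comp_measurable (measurable_pi_lambda _ hmeas)

variable (hp : 0 ≤ p) (hmeas : ∀ i, Measurable (X i)) (hindep : iIndepFun X μ)
  (hbern : ∀ i, μ {ω | X i ω = true} = ENNReal.ofReal p)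
include hp hmeas hindep hbern

lemma integral_prod_ind (S : Finset ι) : ∫ ω, ∏ s ∈ S, ind (X s ω) ∂μ = p ^ S.card := by
  have hS : MeasurableSet (⋂ s ∈ S, X s ⁻¹' {true}) :=
    .biInter S.countable_toSet fun s _ => hmeas s (measurableSet_singleton true)
  rw [prod_ind_eq_indicator, integral_indicator_one hS, measureReal_def,
    hindep.measure_inter_preimage_eq_mul S fun _ _ => measurableSet_singleton true]
  simp [Set.preimage, hbern, hp]

lemma integral_ind_mul_ind [DecidableEq ι] (u v : ι) :
    ∫ ω, ind (X u ω) * ind (X v ω) ∂μ = p ^ ({u, v} : Finset ι).card := by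
  rw [← integral_prod_ind hp hmeas hindep hbern]
  congr with ω
  simp only [ind, Finset.prod_boole, Finset.mem_insert, Finset.mem_singleton, forall_eq_or_imp,
    forall_eq, mul_ite, mul_one, mul_zero]
  grind

lemma integral_ind_mul_ind_mul_ind [DecidableEq ι] (u v w : ι) :
    ∫ ω, ind (X u ω) * ind (X v ω) * ind (X w ω) ∂μ = p ^ ({u, v, w} : Finset ι).card := by
  rw [← integral_prod_ind hp hmeas hindep hbern]
  congr with ω
  simp only [ind, Finset.prod_boole, Finset.mem_insert, Finset.mem_singleton, forall_eq_or_imp,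
    forall_eq, mul_ite, mul_one, mul_zero]
  grind

end Bernoulli

section Laplacian

variable {N : ℕ} (G : SimpleGraph (Fin N)) [DecidableRel G.Adj]

lemma L1_apply (x : Fin N → Bool) (i j : Fin N) :
    L1 G x i j = ∑ m, G.adjMatrix ℝ i m
      * ((1 : Matrix (Fin N) (Fin N) ℝ) i j - (1 : Matrix (Fin N) (Fin N) ℝ) m j)
      * (ind (x i) * ind (x m)) := by
  simp [L1, D1, A1, one_apply, mul_sub, sub_mul, Finset.sum_sub_distrib, diagonal_apply]

lemma L1_true : L1 G (fun _ => true) = G.lapMatrix ℝ := by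
  ext i j
  simp [L1, D1, A1, ind, SimpleGraph.lapMatrix, SimpleGraph.degMatrix, diagonal_apply,
    ← SimpleGraph.card_neighborFinset_eq_degree, SimpleGraph.neighborFinset_eq_filter]

lemma lapMatrix_apply_eq_sum (i j : Fin N) :
    G.lapMatrix ℝ i j = ∑ m, G.adjMatrix ℝ i m
      * ((1 : Matrix (Fin N) (Fin N) ℝ) i j - (1 : Matrix (Fin N) (Fin N) ℝ) m j) := by
  rw [← L1_true, L1_apply]
  simp [ind]

def lapSqCoeff (i j m n : Fin N) : ℝ :=
  G.adjMatrix ℝ i m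
    * (G.adjMatrix ℝ i n * ((1 : Matrix (Fin N) (Fin N) ℝ) i j - (1 : Matrix (Fin N) (Fin N) ℝ) n j)
      - G.adjMatrix ℝ m n * ((1 : Matrix (Fin N) (Fin N) ℝ) m j - (1 : Matrix (Fin N) (Fin N) ℝ) n j))

lemma L1_mul_L1_apply (x : Fin N → Bool) (i j : Fin N) :
    (L1 G x * L1 G x) i j
      = ∑ m, ∑ n, lapSqCoeff G i j m n * (ind (x i) * ind (x m) * ind (x n)) := by
  rw [mul_apply]
  conv_lhs => enter [2, k]; rw [L1_apply G x i k, Finset.sum_mul]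
  rw [Finset.sum_comm]
  refine Finset.sum_congr rfl fun m _ => ?_
  calc _ = G.adjMatrix ℝ i m * (ind (x i) * ind (x m)) * (L1 G x i j - L1 G x m j) := by
        simp only [one_apply, sub_mul, mul_sub, Finset.sum_sub_distrib, ite_mul, mul_ite,
          zero_mul, mul_one, mul_zero, Finset.sum_ite_eq, Finset.mem_univ, if_true]
    _ = _ := by
        rw [L1_apply, L1_apply, ← Finset.sum_sub_distrib, Finset.mul_sum]
        refine Finset.sum_congr rfl fun n _ => ?_
        cases x i <;> cases x m <;>
          simp only [lapSqCoeff, ind, Bool.false_eq_true, if_true, if_false] <;> ring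

lemma sum_sum_lapSqCoeff (i j : Fin N) :
    ∑ m, ∑ n, lapSqCoeff G i j m n = (G.lapMatrix ℝ * G.lapMatrix ℝ) i j := by
  rw [← L1_true, L1_mul_L1_apply]
  simp [ind]

lemma sum_lapSqCoeff_add_lapSqCoeff (i j : Fin N) :
    ∑ m, (lapSqCoeff G i j m i + lapSqCoeff G i j m m) = 2 * G.lapMatrix ℝ i j := by
  rw [lapMatrix_apply_eq_sum, Finset.mul_sum]
  refine Finset.sum_congr rfl fun m _ => ?_
  by_cases h : G.Adj i m
  · simp only [lapSqCoeff, SimpleGraph.adjMatrix_apply, h, h.symm, G.irrefl, if_true, if_false]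
    ring
  · simp [lapSqCoeff, h]

variable {Ω : Type*} [MeasurableSpace Ω] {μ : Measure Ω} [IsProbabilityMeasure μ]
  {X : Fin N → Ω → Bool} {p : ℝ}
  (hp : 0 ≤ p) (hmeas : ∀ i, Measurable (X i)) (hindep : iIndepFun X μ)
  (hbern : ∀ i, μ {ω | X i ω = true} = ENNReal.ofReal p)
include hp hmeas hindep hbern

lemma integral_L1_apply (i j : Fin N) :
    ∫ ω, L1 G (fun v => X v ω) i j ∂μ = p ^ 2 * G.lapMatrix ℝ i j := by
  simp_rw [L1_apply]
  rw [integral_finsetSum _ fun m _ => integrable_comp_pi_bool hmeas fun x =>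
      G.adjMatrix ℝ i m * ((1 : Matrix (Fin N) (Fin N) ℝ) i j - (1 : Matrix (Fin N) (Fin N) ℝ) m j)
        * (ind (x i) * ind (x m)),
    lapMatrix_apply_eq_sum, Finset.mul_sum]
  refine Finset.sum_congr rfl fun m _ => ?_
  rw [integral_const_mul, integral_ind_mul_ind hp hmeas hindep hbern]
  by_cases h : m = i
  · subst h; simp
  · rw [Finset.card_pair (Ne.symm h)]; ring

lemma integral_L1_mul_L1_apply (i j : Fin N) :
    ∫ ω, (L1 G (fun v => X v ω) * L1 G (fun v => X v ω)) i j ∂μ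
      = p ^ 3 * (G.lapMatrix ℝ * G.lapMatrix ℝ) i j + (p ^ 2 - p ^ 3) * (2 * G.lapMatrix ℝ i j) := by
  have hint : ∀ m n, Integrable
      (fun ω => lapSqCoeff G i j m n * (ind (X i ω) * ind (X m ω) * ind (X n ω))) μ :=
    fun m n => integrable_comp_pi_bool hmeas fun x =>
      lapSqCoeff G i j m n * (ind (x i) * ind (x m) * ind (x n))
  have hterm : ∀ m n,
      ∫ ω, lapSqCoeff G i j m n * (ind (X i ω) * ind (X m ω) * ind (X n ω)) ∂μ
        = lapSqCoeff G i j m n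
          * (p ^ 3 + (p ^ 2 - p ^ 3) * ((if n = i then 1 else 0) + if n = m then 1 else 0)) := by
    intro m n
    rw [integral_const_mul, integral_ind_mul_ind_mul_ind hp hmeas hindep hbern]
    by_cases h : i = m
    · subst h; simp [lapSqCoeff]
    · rw [pow_card_insert_insert_singleton p h]
  simp_rw [L1_mul_L1_apply]
  rw [integral_finsetSum _ fun m _ => integrable_finsetSum _ fun n _ => hint m n]
  simp_rw [integral_finsetSum _ fun n _ => hint _ n, hterm]
  rw [← sum_sum_lapSqCoeff, ← sum_lapSqCoeff_add_lapSqCoeff]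
  simp only [mul_add, mul_ite, mul_one, mul_zero, Finset.sum_add_distrib, Finset.sum_ite_eq',
    Finset.mem_univ, if_true, ← Finset.sum_mul]
  ring

end Laplacian

theorem stmt8_general {N : ℕ} (G : SimpleGraph (Fin N)) [DecidableRel G.Adj]
    {Ω : Type*} [MeasurableSpace Ω] (μ : Measure Ω) [IsProbabilityMeasure μ]
    (p : ℝ) (hp0 : 0 ≤ p) (b : ℝ)
    (X : Fin N → Ω → Bool)
    (hmeas : ∀ i, Measurable (X i))
    (hindep : iIndepFun X μ)
    (hbern : ∀ i, μ {ω | X i ω = true} = ENNReal.ofReal p)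
    (W1 : Ω → Matrix (Fin N) (Fin N) ℝ)
    (hW1 : ∀ ω, W1 ω = 1 - b • L1 G (fun v => X v ω)) :
    ∀ i j, ∫ ω, (W1 ω * W1 ω) i j ∂μ
      = ((1 : Matrix (Fin N) (Fin N) ℝ) - (2 * b * p ^ 2) • G.lapMatrix ℝ
          + b ^ 2 • (p ^ 3 • (G.lapMatrix ℝ * G.lapMatrix ℝ - 2 • G.lapMatrix ℝ)
            + (2 * p ^ 2) • G.lapMatrix ℝ)) i j := by
  intro i j
  have hW : ∀ ω, (W1 ω * W1 ω) i j = (1 : Matrix (Fin N) (Fin N) ℝ) i j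
      - 2 * b * L1 G (fun v => X v ω) i j
      + b ^ 2 * (L1 G (fun v => X v ω) * L1 G (fun v => X v ω)) i j := by
    intro ω
    simp [hW1, one_sub_smul_mul_self]
  have hL1 := integrable_comp_pi_bool (μ := μ) hmeas fun x => L1 G x i j
  have hL1sq := integrable_comp_pi_bool (μ := μ) hmeas fun x => (L1 G x * L1 G x) i j
  simp_rw [hW]
  rw [integral_add (by exact (integrable_const _).sub (hL1.const_mul _)) (hL1sq.const_mul _),
    integral_sub (integrable_const _) (hL1.const_mul _), integral_const, integral_const_mul,
    integral_const_mul, integral_L1_apply G hp0 hmeas hindep hbern,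
    integral_L1_mul_L1_apply G hp0 hmeas hindep hbern]
  simp [two_smul]
  ring

theorem stmt8 {N : ℕ} (G : SimpleGraph (Fin N)) [DecidableRel G.Adj]
    {Ω : Type*} [MeasurableSpace Ω] (μ : Measure Ω) [IsProbabilityMeasure μ]
    (p : ℝ) (hp0 : 0 ≤ p) (hp1 : p ≤ 1) (b : ℝ)
    (X : Fin N → Ω → Bool)
    (hmeas : ∀ i, Measurable (X i))
    (hindep : iIndepFun X μ)
    (hbern : ∀ i, μ {ω | X i ω = true} = ENNReal.ofReal p)
    (W1 : Ω → Matrix (Fin N) (Fin N) ℝ)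
    (hW1 : ∀ ω, W1 ω = 1 - b • L1 G (fun v => X v ω)) :
    ∀ i j, ∫ ω, (W1 ω * W1 ω) i j ∂μ
      = ((1 : Matrix (Fin N) (Fin N) ℝ) - (2 * b * p ^ 2) • G.lapMatrix ℝ
          + b ^ 2 • (p ^ 3 • (G.lapMatrix ℝ * G.lapMatrix ℝ - 2 • G.lapMatrix ℝ)
            + (2 * p ^ 2) • G.lapMatrix ℝ)) i j :=
  stmt8_general G μ p hp0 b X hmeas hindep hbern W1 hW1

end
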